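/- arXiv:1909.02671 — 2 statements merged into one kernel-verified Lean document; each statement's English description precedes it below -/
import Mathlib

section
/- For all $\alpha \in [0,1)$ and $\gamma \in (\alpha, 1]$, writing $\ell^* = \lceil (2+\alpha)/(1-\alpha) \rceil$, the quantity $E(\gamma) = \frac{(\gamma-\alpha)(\ell^*+\alpha)}{(1+\alpha)(1-\alpha)(\ell^*+2)} + \frac{1-\gamma}{(1+\alpha)(1-\alpha)}$ satisfies $E(\gamma) < \frac{1}{1+\alpha}$. -/
theorem static_informed_beats_dynamic_high_budget
    (α γ : ℝ) (hα0 : 0 ≤ α) (hα1 : α < 1) (hγα : α < γ) (hγ1 : γ ≤ 1) :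
    (γ - α) * ((⌈(2 + α) / (1 - α)⌉₊ : ℝ) + α) /
        ((1 + α) * (1 - α) * ((⌈(2 + α) / (1 - α)⌉₊ : ℝ) + 2)) +
      (1 - γ) / ((1 + α) * (1 - α)) < 1 / (1 + α) := by
  set L : ℝ := (⌈(2 + α) / (1 - α)⌉₊ : ℝ) with hLdef
  have hL : (0:ℝ) ≤ L := Nat.cast_nonneg _
  have h1 : (0:ℝ) < 1 + α := by linarith
  have h2 : (0:ℝ) < 1 - α := by linarith
  have h3 : (0:ℝ) < L + 2 := by linarith
  have hd1 : (0:ℝ) < (1 + α) * (1 - α) * (L + 2) := by positivity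
  have hd2 : (0:ℝ) < (1 + α) * (1 - α) := by positivity
  rw [div_add_div _ _ hd1.ne' hd2.ne', div_lt_div_iff₀ (by positivity) h1]
  have key : (γ - α) * (L + α) + (1 - γ) * (L + 2) < (1 - α) * (L + 2) := by
    nlinarith [mul_pos (show (0:ℝ) < γ - α by linarith) (show (0:ℝ) < 2 - α by linarith)]
  nlinarith [mul_lt_mul_of_pos_left key (show (0:ℝ) < (1 + α) * (1 - α) * (1 + α) by positivity)]
end

section
/- For $\alpha \in [0,1)$ with $\ell^* = \lceil (2+\alpha)/(1-\alpha) \rceil$, the dynamic-informed saturation budget $\gamma_{sat}^{DI} = \frac{2 + 2\cdot\mathbb{1}(\alpha < 1/2)}{\ell^* + 2}$ is less than or equal to the static-informed saturation budget $\gamma_{sat}^{SI} = \frac{\ell^* + \lceil (2-\alpha)/(1+\alpha)\rceil}{\ell^*+2}$, with equality if and only if $\alpha = 0$. -/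
theorem saturation_budget_comparison
    (α : ℝ) (hα0 : 0 ≤ α) (hα1 : α < 1) :
    (2 + 2 * (if α < 1 / 2 then (1 : ℝ) else 0)) / ((⌈(2 + α) / (1 - α)⌉₊ : ℝ) + 2) ≤
      ((⌈(2 + α) / (1 - α)⌉₊ : ℝ) + (⌈(2 - α) / (1 + α)⌉₊ : ℝ)) /
        ((⌈(2 + α) / (1 - α)⌉₊ : ℝ) + 2) ∧
    ((2 + 2 * (if α < 1 / 2 then (1 : ℝ) else 0)) / ((⌈(2 + α) / (1 - α)⌉₊ : ℝ) + 2) =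
        ((⌈(2 + α) / (1 - α)⌉₊ : ℝ) + (⌈(2 - α) / (1 + α)⌉₊ : ℝ)) /
          ((⌈(2 + α) / (1 - α)⌉₊ : ℝ) + 2) ↔ α = 0) := by
  have h1α : (0:ℝ) < 1 - α := by linarith
  have h1α' : (0:ℝ) < 1 + α := by linarith
  have hL2 : (2:ℕ) ≤ ⌈(2 + α) / (1 - α)⌉₊ := by
    have : (1:ℝ) < (2 + α) / (1 - α) := by
      rw [lt_div_iff₀ h1α]; linarith
    exact Nat.lt_ceil.mpr (by exact_mod_cast this)
  have hL2R : (2:ℝ) ≤ (⌈(2 + α) / (1 - α)⌉₊ : ℝ) := by exact_mod_cast hL2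
  have hD : (0:ℝ) < (⌈(2 + α) / (1 - α)⌉₊ : ℝ) + 2 := by linarith
  by_cases h : α < 1 / 2
  · simp only [if_pos h]
    have hc : ⌈(2 - α) / (1 + α)⌉₊ = 2 := by
      rw [Nat.ceil_eq_iff (by norm_num)]
      constructor
      · push_cast
        rw [lt_div_iff₀ h1α']; linarith
      · rw [div_le_iff₀ h1α']; push_cast; linarith
    rw [hc]
    constructor
    · exact (div_le_div_iff_of_pos_right hD).mpr (by push_cast; linarith)
    · constructor
      · intro heq
        rw [div_eq_div_iff (ne_of_gt hD) (ne_of_gt hD)] at heq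
        have hnum : (2:ℝ) + 2 * 1 = (⌈(2 + α) / (1 - α)⌉₊ : ℝ) + (2:ℕ) :=
          mul_right_cancel₀ (ne_of_gt hD) heq
        have hLeq : (⌈(2 + α) / (1 - α)⌉₊ : ℝ) = 2 := by push_cast at hnum; linarith
        by_contra hα
        have hαpos : 0 < α := lt_of_le_of_ne hα0 (Ne.symm hα)
        have : (2:ℝ) < (2 + α) / (1 - α) := by
          rw [lt_div_iff₀ h1α]; linarith
        have h3 : (2:ℕ) < ⌈(2 + α) / (1 - α)⌉₊ := Nat.lt_ceil.mpr (by exact_mod_cast this)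
        have : (2:ℝ) < (⌈(2 + α) / (1 - α)⌉₊ : ℝ) := by exact_mod_cast h3
        linarith
      · intro hα
        subst hα
        norm_num
  · simp only [if_neg h]
    push_neg at h
    have hL5 : (5:ℕ) ≤ ⌈(2 + α) / (1 - α)⌉₊ := by
      have : (4:ℝ) < (2 + α) / (1 - α) := by
        rw [lt_div_iff₀ h1α]; linarith
      exact Nat.lt_ceil.mpr (by exact_mod_cast this)
    have hL5R : (5:ℝ) ≤ (⌈(2 + α) / (1 - α)⌉₊ : ℝ) := by exact_mod_cast hL5
    have hc1 : (1:ℕ) ≤ ⌈(2 - α) / (1 + α)⌉₊ := by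
      have : (0:ℝ) < (2 - α) / (1 + α) := div_pos (by linarith) h1α'
      exact Nat.one_le_iff_ne_zero.mpr (by positivity)
    have hc1R : (1:ℝ) ≤ (⌈(2 - α) / (1 + α)⌉₊ : ℝ) := by exact_mod_cast hc1
    constructor
    · exact (div_le_div_iff_of_pos_right hD).mpr (by linarith)
    · constructor
      · intro heq
        rw [div_eq_div_iff (ne_of_gt hD) (ne_of_gt hD)] at heq
        have hnum : (2:ℝ) + 2 * 0 = (⌈(2 + α) / (1 - α)⌉₊ : ℝ) + (⌈(2 - α) / (1 + α)⌉₊ : ℝ) :=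
          mul_right_cancel₀ (ne_of_gt hD) heq
        linarith
      · intro hα; subst hα; norm_num at h
end
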